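/- (Generalized quantum fluctuation theorem) Let N be a quantum channel on d×d complex matrices, γ a positive-definite density matrix with N(γ) positive definite, θ a real number, R_γ^θ the rotated Petz recovery map, and ρ a density matrix with ρ and N(ρ) positive definite. With eigenbases as above, define the forward quasi-probability P^{μ,ν}_{→,ij,k'l'} = p_μ ⟨φ'_ν| Π_{k'} N(Π_i |ψ_μ⟩⟨ψ_μ| Π_j) Π_{l'} |φ'_ν⟩, the backward quasi-probability P^{θ,μ,ν}_{←,ij,k'l'} = p'_ν ⟨ψ_μ| Π_i R_γ^θ(Π_{k'} |φ'_ν⟩⟨φ'_ν| Π_{l'}) Π_j |ψ_μ⟩, the complex forward entropy production σ(μ,i,j,ν,k',l') = (log p_μ − log p'_ν) − (1/2)log(r_i r_j/(r'_{k'} r'_{l'})) − (i/2)(log(r_i/r_j) − log(r'_{k'}/r'_{l'})), and the complex backward entropy production σ̃(μ,i,j,ν,k',l') = (log p'_ν − log p_μ) − (1/2)log(r'_{k'} r'_{l'}/(r_i r_j)) − (i/2)(log(r_j/r_i) − log(r'_{l'}/r'_{k'})). Then for every complex number s = s_R + i s_I: ∑_{tuples with σ = s} P^{μ,ν}_{→,ij,k'l'}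 = e^{s_R − 2iθ s_I} · ∑_{tuples with σ̃ = −conj(s)} P^{θ,μ,ν}_{←,ij,k'l'}; i.e., P_→(σ)/P_←^θ(−σ*) = e^{σ_R − 2iθσ_I}. -/

import Mathlib

open Matrix
open scoped ComplexOrder

/-- ⟨v|A|w⟩ -/
noncomputable def braket {d : ℕ} (v : Fin d → ℂ) (A : Matrix (Fin d) (Fin d) ℂ)
    (w : Fin d → ℂ) : ℂ :=
  dotProduct (star v) (A.mulVec w)

/-- |v⟩⟨w| -/
noncomputable def ketbra {d : ℕ} (v w : Fin d → ℂ) : Matrix (Fin d) (Fin d) ℂ :=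
  Matrix.vecMulVec v (star w)

/-- A quantum channel in Kraus form: N(X) = ∑ m, K m * X * (K m)ᴴ. -/
noncomputable def krausMap {d : ℕ} {ι : Type} [Fintype ι] (K : ι → Matrix (Fin d) (Fin d) ℂ)
    (X : Matrix (Fin d) (Fin d) ℂ) : Matrix (Fin d) (Fin d) ℂ :=
  ∑ m, K m * X * (K m)ᴴ

/-- The adjoint map: N†(X) = ∑ m, (K m)ᴴ * X * K m. -/
noncomputable def krausAdj {d : ℕ} {ι : Type} [Fintype ι] (K : ι → Matrix (Fin d) (Fin d) ℂ)
    (X : Matrix (Fin d) (Fin d) ℂ) : Matrix (Fin d) (Fin d) ℂ :=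
  ∑ m, (K m)ᴴ * X * K m

/-- An orthonormal family of vectors in ℂ^d. -/
def IsONB {d : ℕ} (e : Fin d → Fin d → ℂ) : Prop :=
  ∀ i j, dotProduct (star (e i)) (e j) = if i = j then 1 else 0

/-- For A = ∑ i, r i • |e i⟩⟨e i| with `e` orthonormal and `r` positive, the complex
matrix power A^z = exp (z log A) is given by A^z = ∑ i, (r i)^z • |e i⟩⟨e i|. -/
noncomputable def projPow {d : ℕ} (r : Fin d → ℝ) (e : Fin d → Fin d → ℂ) (z : ℂ) :
    Matrix (Fin d) (Fin d) ℂ :=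
  ∑ i, ((r i : ℂ) ^ z) • ketbra (e i) (e i)

/-- The two-point-measurement quasi-probability
P^{μ,ν}_{ij,k'l'} = p_μ ⟨φ'_ν| Π_{k'} N(Π_i |ψ_μ⟩⟨ψ_μ| Π_j) Π_{l'} |φ'_ν⟩. -/
noncomputable def tpmP {d : ℕ} {ι : Type} [Fintype ι] (K : ι → Matrix (Fin d) (Fin d) ℂ)
    (p : Fin d → ℝ) (ψ : Fin d → Fin d → ℂ) (φ : Fin d → Fin d → ℂ)
    (e : Fin d → Fin d → ℂ) (f : Fin d → Fin d → ℂ)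
    (μ ν i j k l : Fin d) : ℂ :=
  (p μ : ℂ) *
    braket (φ ν)
      (ketbra (f k) (f k) *
        krausMap K (ketbra (e i) (e i) * ketbra (ψ μ) (ψ μ) * ketbra (e j) (e j)) *
        ketbra (f l) (f l))
      (φ ν)

/-- The backward two-point-measurement quasi-probability
P^{μ,ν}_{←,ij,k'l'} = p'_ν ⟨ψ_μ| Π_i R(Π_{k'} |φ'_ν⟩⟨φ'_ν| Π_{l'}) Π_j |ψ_μ⟩
for a backward (recovery) channel R. -/
noncomputable def tpmPback {d : ℕ} (R : Matrix (Fin d) (Fin d) ℂ → Matrix (Fin d) (Fin d) ℂ)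
    (p' : Fin d → ℝ) (ψ : Fin d → Fin d → ℂ) (φ : Fin d → Fin d → ℂ)
    (e : Fin d → Fin d → ℂ) (f : Fin d → Fin d → ℂ)
    (μ ν i j k l : Fin d) : ℂ :=
  (p' ν : ℂ) *
    braket (ψ μ)
      (ketbra (e i) (e i) *
        R (ketbra (f k) (f k) * ketbra (φ ν) (φ ν) * ketbra (f l) (f l)) *
        ketbra (e j) (e j))
      (ψ μ)

/-- The rotated Petz recovery map, expressed through the eigendecompositions
γ = ∑ r_i |i⟩⟨i| and N(γ) = ∑ r'_k |k'⟩⟨k'|: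
R_γ^θ(X) = γ^{1/2+iθ} N†(N(γ)^{-1/2-iθ} X N(γ)^{-1/2+iθ}) γ^{1/2-iθ}. -/
noncomputable def rotPetzB {d : ℕ} {ι : Type} [Fintype ι] (K : ι → Matrix (Fin d) (Fin d) ℂ)
    (r : Fin d → ℝ) (e : Fin d → Fin d → ℂ) (r' : Fin d → ℝ) (f : Fin d → Fin d → ℂ)
    (θ : ℝ) (X : Matrix (Fin d) (Fin d) ℂ) : Matrix (Fin d) (Fin d) ℂ :=
  projPow r e (1/2 + θ * Complex.I) *
    krausAdj K (projPow r' f (-(1/2) - θ * Complex.I) * X *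
      projPow r' f (-(1/2) + θ * Complex.I)) *
    projPow r e (1/2 - θ * Complex.I)

/-- The complex forward entropy production σ(μ,i,j,ν,k',l'). -/
noncomputable def entProdFwd {d : ℕ} (p p' r r' : Fin d → ℝ) (μ ν i j k l : Fin d) : ℂ :=
  (((Real.log (p μ) - Real.log (p' ν)) -
      1/2 * Real.log (r i * r j / (r' k * r' l)) : ℝ) : ℂ) -
    Complex.I / 2 * ((Real.log (r i / r j) - Real.log (r' k / r' l) : ℝ) : ℂ)

/-- The complex backward entropy production σ̃(μ,i,j,ν,k',l'). -/
noncomputable def entProdBwd {d : ℕ} (p p' r r' : Fin d → ℝ) (μ ν i j k l : Fin d) : ℂ :=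
  (((Real.log (p' ν) - Real.log (p μ)) -
      1/2 * Real.log (r' k * r' l / (r i * r j)) : ℝ) : ℂ) -
    Complex.I / 2 * ((Real.log (r j / r i) - Real.log (r' l / r' k) : ℝ) : ℂ)

/-!
The identity holds term by term once the forward tuple `(i, j, k', l')` is paired with the
backward tuple `(j, i, l', k')`. For this pairing `σ̃ = -σ*`, and both quasi-probabilities
contain the same overlaps `⟨i|ψ_μ⟩⟨ψ_μ|j⟩`, `⟨φ'_ν|k'⟩⟨l'|φ'_ν⟩` and the same channel element
`⟨k'|N(|i⟩⟨j|)|l'⟩`, the backward one through `N†` by duality. What remains is the ratio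
`p_μ / p'_ν` against the eigenvalue powers produced by the rotated Petz map, which is exactly
`exp (σ_R - 2iθσ_I)`: the moduli of the powers give `σ_R`, their phases give `-2θσ_I`.
-/

theorem sum_swap_index_pairs {α β M : Type*} [Fintype α] [Fintype β] [AddCommMonoid M]
    (g : α → α → β → β → M) :
    ∑ i, ∑ j, ∑ k, ∑ l, g j i l k = ∑ i, ∑ j, ∑ k, ∑ l, g i j k l := by
  rw [Finset.sum_comm]
  exact Finset.sum_congr rfl fun _ _ => Finset.sum_congr rfl fun _ _ => Finset.sum_comm

section QuasiProbability

variable {d : ℕ}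

theorem ketbra_mul_ketbra (a b c g : Fin d → ℂ) :
    ketbra a b * ketbra c g = (star b ⬝ᵥ c) • ketbra a g := by
  rw [ketbra, ketbra, vecMulVec_mul_vecMulVec, vecMulVec_smul, ketbra]

theorem ketbra_mul_mul_ketbra (a b c g : Fin d → ℂ) (X : Matrix (Fin d) (Fin d) ℂ) :
    ketbra a b * X * ketbra c g = braket b X c • ketbra a g := by
  rw [ketbra, ketbra, vecMulVec_mul, vecMulVec_mul_vecMulVec, vecMulVec_smul, braket,
    dotProduct_mulVec, ketbra]

theorem braket_ketbra (u a b v : Fin d → ℂ) :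
    braket u (ketbra a b) v = (star u ⬝ᵥ a) * (star b ⬝ᵥ v) := by
  rw [braket, ketbra, vecMulVec_mulVec]
  simp [dotProduct, Finset.sum_mul, mul_assoc]

theorem braket_smul (u v : Fin d → ℂ) (c : ℂ) (A : Matrix (Fin d) (Fin d) ℂ) :
    braket u (c • A) v = c * braket u A v := by
  simp [braket, smul_mulVec]

theorem braket_sum {ι : Type*} [Fintype ι] (u v : Fin d → ℂ)
    (A : ι → Matrix (Fin d) (Fin d) ℂ) :
    braket u (∑ m, A m) v = ∑ m, braket u (A m) v := by
  simp [braket, sum_mulVec, dotProduct_sum]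

theorem braket_mul_mul (u v : Fin d → ℂ) (A X B : Matrix (Fin d) (Fin d) ℂ) :
    braket u (A * X * B) v = braket (Aᴴ *ᵥ u) X (B *ᵥ v) := by
  rw [braket, braket, ← mulVec_mulVec, ← mulVec_mulVec, dotProduct_mulVec, star_mulVec,
    conjTranspose_conjTranspose]

theorem projPow_mul_ketbra {r : Fin d → ℝ} {e : Fin d → Fin d → ℂ} (he : IsONB e) (z : ℂ)
    (i : Fin d) (b : Fin d → ℂ) :
    projPow r e z * ketbra (e i) b = ((r i : ℂ) ^ z) • ketbra (e i) b := by
  simp [projPow, Finset.sum_mul, ketbra_mul_ketbra, he _ i]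

theorem ketbra_mul_projPow {r : Fin d → ℝ} {e : Fin d → Fin d → ℂ} (he : IsONB e) (z : ℂ)
    (i : Fin d) (a : Fin d → ℂ) :
    ketbra a (e i) * projPow r e z = ((r i : ℂ) ^ z) • ketbra a (e i) := by
  simp [projPow, Finset.mul_sum, ketbra_mul_ketbra, he i]

variable {ι : Type} [Fintype ι]

theorem krausMap_smul (K : ι → Matrix (Fin d) (Fin d) ℂ) (c : ℂ)
    (X : Matrix (Fin d) (Fin d) ℂ) :
    krausMap K (c • X) = c • krausMap K X := by
  simp [krausMap, Finset.smul_sum]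

theorem krausAdj_smul (K : ι → Matrix (Fin d) (Fin d) ℂ) (c : ℂ)
    (X : Matrix (Fin d) (Fin d) ℂ) :
    krausAdj K (c • X) = c • krausAdj K X := by
  simp [krausAdj, Finset.smul_sum]

theorem braket_krausAdj_ketbra (K : ι → Matrix (Fin d) (Fin d) ℂ) (a b c g : Fin d → ℂ) :
    braket b (krausAdj K (ketbra c g)) a = braket g (krausMap K (ketbra a b)) c := by
  simp only [krausAdj, krausMap, braket_sum, braket_mul_mul, braket_ketbra,
    conjTranspose_conjTranspose]
  refine Finset.sum_congr rfl fun m _ => ?_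
  rw [star_mulVec, ← dotProduct_mulVec, star_mulVec, ← dotProduct_mulVec,
    conjTranspose_conjTranspose]
  ring

theorem rotPetzB_smul (K : ι → Matrix (Fin d) (Fin d) ℂ) (r : Fin d → ℝ)
    (e : Fin d → Fin d → ℂ) (r' : Fin d → ℝ) (f : Fin d → Fin d → ℂ) (θ : ℝ) (c : ℂ)
    (X : Matrix (Fin d) (Fin d) ℂ) :
    rotPetzB K r e r' f θ (c • X) = c • rotPetzB K r e r' f θ X := by
  simp [rotPetzB, krausAdj_smul]

theorem ketbra_mul_rotPetzB_mul_ketbra (K : ι → Matrix (Fin d) (Fin d) ℂ)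
    {r : Fin d → ℝ} {e : Fin d → Fin d → ℂ} {r' : Fin d → ℝ} {f : Fin d → Fin d → ℂ}
    (he : IsONB e) (hf : IsONB f) (θ : ℝ) (i j k l : Fin d) :
    ketbra (e i) (e i) * rotPetzB K r e r' f θ (ketbra (f k) (f l)) * ketbra (e j) (e j) =
      ((r' k : ℂ) ^ (-(1/2) - θ * Complex.I) * (r' l : ℂ) ^ (-(1/2) + θ * Complex.I) *
        (r i : ℂ) ^ (1/2 + θ * Complex.I) * (r j : ℂ) ^ (1/2 - θ * Complex.I) *
        braket (e i) (krausAdj K (ketbra (f k) (f l))) (e j)) • ketbra (e i) (e j) := by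
  simp only [rotPetzB, ← mul_assoc, projPow_mul_ketbra hf, smul_mul_assoc,
    ketbra_mul_projPow hf, ketbra_mul_projPow he, smul_smul, krausAdj_smul, mul_smul_comm]
  rw [mul_assoc _ (projPow r e _), projPow_mul_ketbra he, mul_smul_comm, smul_smul,
    ketbra_mul_mul_ketbra, smul_smul]

theorem tpmP_eq (K : ι → Matrix (Fin d) (Fin d) ℂ) (p : Fin d → ℝ)
    (ψ φ e f : Fin d → Fin d → ℂ) (μ ν i j k l : Fin d) :
    tpmP K p ψ φ e f μ ν i j k l =
      p μ * ((star (e i) ⬝ᵥ ψ μ) * (star (ψ μ) ⬝ᵥ e j)) *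
        braket (f k) (krausMap K (ketbra (e i) (e j))) (f l) *
        ((star (φ ν) ⬝ᵥ f k) * (star (f l) ⬝ᵥ φ ν)) := by
  rw [tpmP, ketbra_mul_mul_ketbra (e i), krausMap_smul, mul_smul_comm, smul_mul_assoc,
    ketbra_mul_mul_ketbra, braket_smul, braket_smul, braket_ketbra, braket_ketbra]
  ring

theorem tpmPback_rotPetzB_eq (K : ι → Matrix (Fin d) (Fin d) ℂ)
    {r : Fin d → ℝ} {e : Fin d → Fin d → ℂ} {r' : Fin d → ℝ} {f : Fin d → Fin d → ℂ}
    (he : IsONB e) (hf : IsONB f) (θ : ℝ) (p' : Fin d → ℝ) (ψ φ : Fin d → Fin d → ℂ)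
    (μ ν i j k l : Fin d) :
    tpmPback (rotPetzB K r e r' f θ) p' ψ φ e f μ ν i j k l =
      p' ν * ((star (ψ μ) ⬝ᵥ e i) * (star (e j) ⬝ᵥ ψ μ)) *
        braket (e i) (krausAdj K (ketbra (f k) (f l))) (e j) *
        ((star (f k) ⬝ᵥ φ ν) * (star (φ ν) ⬝ᵥ f l)) *
        ((r' k : ℂ) ^ (-(1/2) - θ * Complex.I) * (r' l : ℂ) ^ (-(1/2) + θ * Complex.I) *
          (r i : ℂ) ^ (1/2 + θ * Complex.I) * (r j : ℂ) ^ (1/2 - θ * Complex.I)) := by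
  rw [tpmPback, ketbra_mul_mul_ketbra (f k), rotPetzB_smul, mul_smul_comm, smul_mul_assoc,
    ketbra_mul_rotPetzB_mul_ketbra K he hf, braket_smul, braket_smul, braket_ketbra,
    braket_ketbra]
  ring

theorem entProdBwd_swap_eq_neg_conj (p p' r r' : Fin d → ℝ) (μ ν i j k l : Fin d) :
    entProdBwd p p' r r' μ ν j i l k = -(starRingEnd ℂ) (entProdFwd p p' r r' μ ν i j k l) := by
  have hinv : r' l * r' k / (r j * r i) = (r i * r j / (r' k * r' l))⁻¹ := by
    rw [inv_div]; ring
  rw [entProdBwd, entProdFwd, hinv, Real.log_inv]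
  simp only [map_sub, map_mul, map_div₀, Complex.conj_I, Complex.conj_ofReal, map_ofNat]
  push_cast
  ring

theorem entProdFwd_re (p p' r r' : Fin d → ℝ) (μ ν i j k l : Fin d) :
    (entProdFwd p p' r r' μ ν i j k l).re =
      Real.log (p μ) - Real.log (p' ν) - 1/2 * Real.log (r i * r j / (r' k * r' l)) := by
  simp [entProdFwd]

theorem entProdFwd_im (p p' r r' : Fin d → ℝ) (μ ν i j k l : Fin d) :
    (entProdFwd p p' r r' μ ν i j k l).im =
      -(1/2 * (Real.log (r i / r j) - Real.log (r' k / r' l))) := by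
  simp [entProdFwd]

theorem ofReal_cpow_eq_exp {x : ℝ} (hx : 0 < x) (z : ℂ) :
    (x : ℂ) ^ z = Complex.exp (Real.log x * z) := by
  rw [Complex.cpow_def_of_ne_zero (by exact_mod_cast hx.ne'), Complex.ofReal_log hx.le]

theorem exp_mul_eq_of_entProdFwd_eq {p p' r r' : Fin d → ℝ} (hp : ∀ μ, 0 < p μ)
    (hp' : ∀ ν, 0 < p' ν) (hr : ∀ i, 0 < r i) (hr' : ∀ k, 0 < r' k) (θ : ℝ)
    {μ ν i j k l : Fin d} {σ : ℂ} (hσ : entProdFwd p p' r r' μ ν i j k l = σ) :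
    Complex.exp (σ.re - 2 * θ * σ.im * Complex.I) *
      (p' ν * ((r' l : ℂ) ^ (-(1/2) - θ * Complex.I) * (r' k : ℂ) ^ (-(1/2) + θ * Complex.I) *
        (r j : ℂ) ^ (1/2 + θ * Complex.I) * (r i : ℂ) ^ (1/2 - θ * Complex.I))) = p μ := by
  have hexp_log : ∀ {x : ℝ}, 0 < x → (x : ℂ) = Complex.exp (Real.log x) := fun hx => by
    rw [← Complex.ofReal_exp, Real.exp_log hx]
  subst hσ
  rw [entProdFwd_re, entProdFwd_im,
    Real.log_div (mul_pos (hr i) (hr j)).ne' (mul_pos (hr' k) (hr' l)).ne',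
    Real.log_mul (hr i).ne' (hr j).ne', Real.log_mul (hr' k).ne' (hr' l).ne',
    Real.log_div (hr i).ne' (hr j).ne', Real.log_div (hr' k).ne' (hr' l).ne',
    hexp_log (hp' ν), hexp_log (hp μ), ofReal_cpow_eq_exp (hr' l), ofReal_cpow_eq_exp (hr' k),
    ofReal_cpow_eq_exp (hr j), ofReal_cpow_eq_exp (hr i)]
  simp only [← Complex.exp_add]
  congr 1
  push_cast
  ring

theorem tpmP_eq_exp_mul_tpmPback {K : ι → Matrix (Fin d) (Fin d) ℂ}
    {p p' r r' : Fin d → ℝ} {ψ φ e f : Fin d → Fin d → ℂ} (hp : ∀ μ, 0 < p μ)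
    (hp' : ∀ ν, 0 < p' ν) (hr : ∀ i, 0 < r i) (hr' : ∀ k, 0 < r' k) (he : IsONB e)
    (hf : IsONB f) (θ : ℝ) {μ ν i j k l : Fin d} {σ : ℂ}
    (hσ : entProdFwd p p' r r' μ ν i j k l = σ) :
    tpmP K p ψ φ e f μ ν i j k l =
      Complex.exp (σ.re - 2 * θ * σ.im * Complex.I) *
        tpmPback (rotPetzB K r e r' f θ) p' ψ φ e f μ ν j i l k := by
  rw [tpmP_eq, tpmPback_rotPetzB_eq K he hf, braket_krausAdj_ketbra,
    ← exp_mul_eq_of_entProdFwd_eq hp hp' hr hr' θ hσ]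
  ring

theorem ite_entProdFwd_eq_exp_mul_ite_entProdBwd {K : ι → Matrix (Fin d) (Fin d) ℂ}
    {p p' r r' : Fin d → ℝ} {ψ φ e f : Fin d → Fin d → ℂ} (hp : ∀ μ, 0 < p μ)
    (hp' : ∀ ν, 0 < p' ν) (hr : ∀ i, 0 < r i) (hr' : ∀ k, 0 < r' k) (he : IsONB e)
    (hf : IsONB f) (θ : ℝ) (s : ℂ) (μ ν i j k l : Fin d) :
    (if entProdFwd p p' r r' μ ν i j k l = s then tpmP K p ψ φ e f μ ν i j k l else 0) =
      Complex.exp (s.re - 2 * θ * s.im * Complex.I) *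
        if entProdBwd p p' r r' μ ν j i l k = -(starRingEnd ℂ) s then
          tpmPback (rotPetzB K r e r' f θ) p' ψ φ e f μ ν j i l k
        else 0 := by
  simp only [entProdBwd_swap_eq_neg_conj, neg_inj, (starRingEnd ℂ).injective.eq_iff]
  split_ifs with hσ
  · exact tpmP_eq_exp_mul_tpmPback hp hp' hr hr' he hf θ hσ
  · rw [mul_zero]

end QuasiProbability

theorem generalized_quantum_fluctuation_theorem_general
    {d : ℕ} {ι : Type} [Fintype ι] (K : ι → Matrix (Fin d) (Fin d) ℂ)
    (r : Fin d → ℝ) (e : Fin d → Fin d → ℂ) (hr : ∀ i, 0 < r i) (he : IsONB e)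
    (r' : Fin d → ℝ) (f : Fin d → Fin d → ℂ) (hr' : ∀ k, 0 < r' k) (hf : IsONB f)
    (θ : ℝ)
    (p : Fin d → ℝ) (ψ : Fin d → Fin d → ℂ) (hp : ∀ μ, 0 < p μ)
    (p' : Fin d → ℝ) (φ : Fin d → Fin d → ℂ) (hp' : ∀ ν, 0 < p' ν) :
    ∀ s : ℂ,
      (∑ μ, ∑ ν, ∑ i, ∑ j, ∑ k, ∑ l,
        if entProdFwd p p' r r' μ ν i j k l = s then
          tpmP K p ψ φ e f μ ν i j k l
        else 0) =
      Complex.exp ((s.re : ℂ) - 2 * (θ : ℂ) * (s.im : ℂ) * Complex.I) *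
        (∑ μ, ∑ ν, ∑ i, ∑ j, ∑ k, ∑ l,
          if entProdBwd p p' r r' μ ν i j k l = -(starRingEnd ℂ) s then
            tpmPback (rotPetzB K r e r' f θ) p' ψ φ e f μ ν i j k l
          else 0) := by
  intro s
  simp only [ite_entProdFwd_eq_exp_mul_ite_entProdBwd hp hp' hr hr' he hf θ s, ← Finset.mul_sum]
  exact congrArg (Complex.exp _ * ·) <| Finset.sum_congr rfl fun _ _ =>
    Finset.sum_congr rfl fun _ _ => sum_swap_index_pairs _

/-- generalized quantum fluctuation theorem,
P_→(σ) = e^{σ_R − 2iθσ_I} P_←^θ(−σ*). -/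
theorem generalized_quantum_fluctuation_theorem
    {d : ℕ} {ι : Type} [Fintype ι] (K : ι → Matrix (Fin d) (Fin d) ℂ)
    (hK : ∑ m, (K m)ᴴ * K m = 1)
    (r : Fin d → ℝ) (e : Fin d → Fin d → ℂ) (hr : ∀ i, 0 < r i) (he : IsONB e)
    (hrtr : ∑ i, r i = 1)
    (r' : Fin d → ℝ) (f : Fin d → Fin d → ℂ) (hr' : ∀ k, 0 < r' k) (hf : IsONB f)
    (hNγ : krausMap K (∑ i, ((r i : ℂ)) • ketbra (e i) (e i)) =
      ∑ k, ((r' k : ℂ)) • ketbra (f k) (f k))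
    (θ : ℝ)
    (ρ : Matrix (Fin d) (Fin d) ℂ)
    (p : Fin d → ℝ) (ψ : Fin d → Fin d → ℂ) (hp : ∀ μ, 0 < p μ) (hψ : IsONB ψ)
    (hρ : ρ = ∑ μ, ((p μ : ℂ)) • ketbra (ψ μ) (ψ μ))
    (p' : Fin d → ℝ) (φ : Fin d → Fin d → ℂ) (hp' : ∀ ν, 0 < p' ν) (hφ : IsONB φ)
    (hNρ : krausMap K ρ = ∑ ν, ((p' ν : ℂ)) • ketbra (φ ν) (φ ν)) :
    ∀ s : ℂ,
      (∑ μ, ∑ ν, ∑ i, ∑ j, ∑ k, ∑ l,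
        if entProdFwd p p' r r' μ ν i j k l = s then
          tpmP K p ψ φ e f μ ν i j k l
        else 0) =
      Complex.exp ((s.re : ℂ) - 2 * (θ : ℂ) * (s.im : ℂ) * Complex.I) *
        (∑ μ, ∑ ν, ∑ i, ∑ j, ∑ k, ∑ l,
          if entProdBwd p p' r r' μ ν i j k l = -(starRingEnd ℂ) s then
            tpmPback (rotPetzB K r e r' f θ) p' ψ φ e f μ ν i j k l
          else 0) :=
  generalized_quantum_fluctuation_theorem_general K r e hr he r' f hr' hf θ p ψ hp p' φ hp'
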